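/- arXiv:2202.02208 — 3 statements merged into one kernel-verified Lean document; each statement's English description precedes it below -/
import Mathlib

section
/- Let f ∈ C^∞(ℝ^d;ℝ) satisfy the Morse–Bott assumption, let Γ be a critical submanifold on which Hess f has j ≥ 2 negative eigenvalues, and set σ = f(Γ). Then for all sufficiently small r > 0 the set X_σ ∩ (Γ + B(0,r)) is connected, where Γ + B(0,r) denotes the set of points at distance less than r from Γ. -/
open Metric Set

noncomputable section

/-- `Γ + B(0, r)`: the set of points at (Euclidean) distance less than `r` from `Γ`. -/
def tub {d : ℕ} (Γ : Set (EuclideanSpace ℝ (Fin d))) (r : ℝ) :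
    Set (EuclideanSpace ℝ (Fin d)) :=
  {x | ∃ y ∈ Γ, dist x y < r}

/-- The sublevel set `X_σ = {x : f x < σ}`. -/
def subLevel {d : ℕ} (f : EuclideanSpace ℝ (Fin d) → ℝ) (σ : ℝ) :
    Set (EuclideanSpace ℝ (Fin d)) :=
  {x | f x < σ}

/-- **Morse–Bott assumption for a single critical submanifold**, encoded through the
Morse–Bott lemma: `Γ ⊆ ℝ^d` is a boundaryless compact connected submanifold of dimension
`dΓ` consisting of critical points of `f`, on which the transversal Hessian of `f` is
nondegenerate with exactly `j` negative eigenvalues; equivalently, around each point of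
`Γ` there are smooth local coordinates `(y_t, y_-, y_+) ∈ ℝ^{dΓ} × ℝ^{j} × ℝ^{d-dΓ-j}`
straightening `Γ` to `{y_- = 0, y_+ = 0}` in which
`f = f(Γ) - |y_-|² + |y_+|²`. -/
def IsMorseBottManifold (d dΓ j : ℕ) (f : EuclideanSpace ℝ (Fin d) → ℝ)
    (Γ : Set (EuclideanSpace ℝ (Fin d))) : Prop :=
  IsCompact Γ ∧ IsConnected Γ ∧ (∀ x ∈ Γ, gradient f x = 0) ∧
  ∀ a ∈ Γ, ∃ (U : Set (EuclideanSpace ℝ (Fin d)))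
    (φ : EuclideanSpace ℝ (Fin d) →
      EuclideanSpace ℝ (Fin dΓ) × EuclideanSpace ℝ (Fin j) ×
        EuclideanSpace ℝ (Fin (d - dΓ - j)))
    (ψ : EuclideanSpace ℝ (Fin dΓ) × EuclideanSpace ℝ (Fin j) ×
        EuclideanSpace ℝ (Fin (d - dΓ - j)) → EuclideanSpace ℝ (Fin d)),
    IsOpen U ∧ a ∈ U ∧
    ContDiffOn ℝ (⊤ : ℕ∞) φ U ∧ IsOpen (φ '' U) ∧
    ContDiffOn ℝ (⊤ : ℕ∞) ψ (φ '' U) ∧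
    (∀ x ∈ U, ψ (φ x) = x) ∧ (∀ y ∈ φ '' U, φ (ψ y) = y) ∧
    Γ ∩ U = {x ∈ U | (φ x).2.1 = 0 ∧ (φ x).2.2 = 0} ∧
    (∀ x ∈ U, f x = f a - ‖(φ x).2.1‖ ^ 2 + ‖(φ x).2.2‖ ^ 2)

/-- `S` has exactly two connected components, namely `Aplus` and `Aminus`. -/
def HasExactlyTwoComponents {d : ℕ} (S Aplus Aminus : Set (EuclideanSpace ℝ (Fin d))) : Prop :=
  Aplus.Nonempty ∧ Aminus.Nonempty ∧ Aplus ∪ Aminus = S ∧ Disjoint Aplus Aminus ∧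
  (∀ x ∈ Aplus, connectedComponentIn S x = Aplus) ∧ (∀ x ∈ Aminus, connectedComponentIn S x = Aminus)

/-!
In a Morse–Bott chart `φ` around a point of `Γ`, the sublevel set `{f < σ}` is the cone
`‖y₊‖ < ‖y₋‖`. Its intersection with a small ball centred on the zero section is connected,
because a punctured ball in `ℝ^j` is connected when `j ≥ 2`. So all points of `X_σ` close to a
point `y ∈ Γ` lie in one component of `S = X_σ ∩ (Γ + B(0,r))`, and as `Γ` is connected this
component does not depend on `y`. Every other point `x ∈ S`, within `r` of some `y ∈ Γ`, is
joined inside `S` to points arbitrarily close to `y` by the image under `φ⁻¹` of the segment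
from `φ x` to `φ y`: along it the normal coordinates only shrink, and since `φ⁻¹` is nearly
affine on small sets the curve stays within `dist x y` of `y`. Compactness of `Γ` makes the
admissible radius uniform.
-/

open Filter Topology
open scoped NNReal

section Topology

variable {X : Type*} [TopologicalSpace X]

theorem IsPreconnected.subset_connectedComponentIn_of_mem {S K : Set X} (hK : IsPreconnected K)
    (hKS : K ⊆ S) {x z : X} (hzK : z ∈ K) (hz : z ∈ _root_.connectedComponentIn S x) :
    K ⊆ _root_.connectedComponentIn S x :=
  connectedComponentIn_eq hz ▸ hK.subset_connectedComponentIn hzK hKS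

theorem IsPreconnected.subset_connectedComponentIn_of_mem_closure {S K V : Set X}
    (hK : IsPreconnected K) (hKS : K ⊆ S) {x y : X} (hV : V ∈ 𝓝 y) (hSV : S ∩ V ⊆ K)
    (hy : y ∈ closure (_root_.connectedComponentIn S x)) :
    K ⊆ _root_.connectedComponentIn S x := by
  obtain ⟨z, hzV, hz⟩ := mem_closure_iff_nhds.1 hy V hV
  exact hK.subset_connectedComponentIn_of_mem hKS (hSV ⟨connectedComponentIn_subset S x hz, hzV⟩) hz

theorem isConnected_of_components_accumulate {S Γ : Set X} (hΓ : IsConnected Γ)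
    (hloc : ∀ y ∈ Γ, ∃ K ⊆ S, IsPreconnected K ∧ y ∈ closure K ∧ ∃ V ∈ 𝓝 y, S ∩ V ⊆ K)
    (hreach : ∀ x ∈ S, ∃ y ∈ Γ, y ∈ closure (connectedComponentIn S x)) :
    IsConnected S := by
  choose! K hKS hK hyK V hV hSV using hloc
  have hnear : ∀ y ∈ Γ, ∀ᶠ w in 𝓝[Γ] y, w ∈ Γ → (K w ∩ K y).Nonempty := by
    intro y hy
    filter_upwards [nhdsWithin_le_nhds (eventually_mem_nhds_iff.2 (hV y hy))] with w hVw hw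
    obtain ⟨z, hzV, hzK⟩ := mem_closure_iff_nhds.1 (hyK w hw) _ hVw
    exact ⟨z, hzK, hSV y hy ⟨hKS w hw hzK, hzV⟩⟩
  have hsame : ∀ y ∈ Γ, ∀ w ∈ Γ, ∀ x, K y ⊆ connectedComponentIn S x →
      K w ⊆ connectedComponentIn S x := by
    intro y hy w hw
    refine hΓ.isPreconnected.induction₂' (fun y w => ∀ x, K y ⊆ connectedComponentIn S x →
      K w ⊆ connectedComponentIn S x) (fun y hy => ?_)
      (fun _ _ _ _ _ _ h₁ h₂ x hx => h₂ x (h₁ x hx)) hy hw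
    filter_upwards [hnear y hy, self_mem_nhdsWithin] with w hyw hw
    obtain ⟨z, hzw, hzy⟩ := hyw hw
    exact ⟨fun x hx => (hK w hw).subset_connectedComponentIn_of_mem (hKS w hw) hzw (hx hzy),
      fun x hx => (hK y hy).subset_connectedComponentIn_of_mem (hKS y hy) hzy (hx hzw)⟩
  obtain ⟨y₀, hy₀⟩ := hΓ.nonempty
  obtain ⟨z₀, hz₀⟩ := closure_nonempty_iff.1 ⟨y₀, hyK y₀ hy₀⟩
  have hz₀S : z₀ ∈ S := hKS y₀ hy₀ hz₀
  suffices connectedComponentIn S z₀ = S from this ▸ isConnected_connectedComponentIn_iff.2 hz₀S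
  refine (connectedComponentIn_subset S z₀).antisymm fun x hx => ?_
  obtain ⟨y, hy, hyx⟩ := hreach x hx
  have hKx := hsame y hy y₀ hy₀ x <|
    (hK y hy).subset_connectedComponentIn_of_mem_closure (hKS y hy) (hV y hy) (hSV y hy) hyx
  rw [← connectedComponentIn_eq (hKx hz₀)]
  exact mem_connectedComponentIn hx

theorem IsCompact.exists_pos_forall_ball {Y : Type*} [PseudoMetricSpace Y] {Γ : Set Y}
    (hΓ : IsCompact Γ) {R : Y → Y → Prop}
    (h : ∀ a ∈ Γ, ∃ ρ > 0, ∀ᶠ y in 𝓝 a, ∀ x ∈ ball y ρ, R y x) :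
    ∃ ρ > 0, ∀ y ∈ Γ, ∀ x ∈ ball y ρ, R y x := by
  have : ∀ᶠ ρ in 𝓝 (0 : ℝ), ∀ y ∈ Γ, ∀ x ∈ ball y ρ, R y x := by
    refine hΓ.eventually_forall_of_forall_eventually fun a ha => ?_
    obtain ⟨ρ, hρ, hρa⟩ := h a ha
    filter_upwards [prod_mem_nhds (Iio_mem_nhds hρ) hρa] with p hp x hx
    exact hp.2 x (ball_subset_ball hp.1.le hx)
  exact ((this.filter_mono nhdsWithin_le_nhds).and (self_mem_nhdsWithin (s := Ioi 0))).exists.imp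
    fun ρ h => ⟨h.2, h.1⟩

end Topology

theorem ApproximatesLinearOn.dist_add_smul_sub_le {E F : Type*} [NormedAddCommGroup E]
    [NormedSpace ℝ E] [NormedAddCommGroup F] [NormedSpace ℝ F] {g : E → F} {A : E →L[ℝ] F}
    {s : Set E} {c : ℝ≥0} (hg : ApproximatesLinearOn g A s c) (hs : Convex ℝ s) {w₀ w₁ : E}
    (h₀ : w₀ ∈ s) (h₁ : w₁ ∈ s) (hc : 2 * c * ‖w₀ - w₁‖ ≤ dist (g w₀) (g w₁)) {t : ℝ}
    (ht : t ∈ Icc (0 : ℝ) 1) :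
    dist (g (w₀ + t • (w₁ - w₀))) (g w₁) ≤ dist (g w₀) (g w₁) := by
  set w := w₀ + t • (w₁ - w₀)
  obtain ⟨ht₀, ht₁⟩ := ht
  simp only [dist_eq_norm] at hc ⊢
  -- `g w` is within `2 c t ‖w₀ - w₁‖` of the point `(1 - t) • g w₀ + t • g w₁` of the chord
  have hsplit : g w - g w₁ = (g w - g w₀ - A (w - w₀)) - t • (g w₁ - g w₀ - A (w₁ - w₀))
      + (1 - t) • (g w₀ - g w₁) := by
    have : A (w - w₀) = t • A (w₁ - w₀) := by simp [w]
    rw [this]; module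
  have hw : ‖g w - g w₀ - A (w - w₀)‖ ≤ c * (t * ‖w₀ - w₁‖) := by
    convert hg w (hs.add_smul_sub_mem h₀ h₁ ⟨ht₀, ht₁⟩) w₀ h₀ using 2
    simp [w, norm_smul, abs_of_nonneg ht₀, norm_sub_rev]
  have h₁₀ : ‖g w₁ - g w₀ - A (w₁ - w₀)‖ ≤ c * ‖w₀ - w₁‖ := by
    simpa [norm_sub_rev w₁] using hg w₁ h₁ w₀ h₀
  calc ‖g w - g w₁‖
      ≤ ‖g w - g w₀ - A (w - w₀)‖ + ‖t • (g w₁ - g w₀ - A (w₁ - w₀))‖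
          + ‖(1 - t) • (g w₀ - g w₁)‖ := hsplit ▸ norm_add_le_of_le (norm_sub_le _ _) le_rfl
    _ = ‖g w - g w₀ - A (w - w₀)‖ + t * ‖g w₁ - g w₀ - A (w₁ - w₀)‖
          + (1 - t) * ‖g w₀ - g w₁‖ := by
        rw [norm_smul, norm_smul, Real.norm_of_nonneg ht₀, Real.norm_of_nonneg (sub_nonneg.2 ht₁)]
    _ ≤ c * (t * ‖w₀ - w₁‖) + t * (c * ‖w₀ - w₁‖) + (1 - t) * ‖g w₀ - g w₁‖ := by
        gcongr
    _ ≤ ‖g w₀ - g w₁‖ := by nlinarith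

section NegativeCone

variable {T M N : Type*} [NormedAddCommGroup T] [NormedAddCommGroup M] [NormedAddCommGroup N]

def negativeCone (M N : Type*) [Norm M] [Norm N] : Set (M × N) := {q | ‖q.2‖ < ‖q.1‖}

theorem ball_inter_preimage_snd_negativeCone {c : T × M × N} (hc : c.2 = 0) (β : ℝ) :
    ball c β ∩ Prod.snd ⁻¹' negativeCone M N =
      ball c.1 β ×ˢ (ball (0 : M × N) β ∩ negativeCone M N) := by
  obtain ⟨c₁, c₂⟩ := c
  subst hc
  ext ⟨t, q⟩
  simp only [mem_inter_iff, ← ball_prod_same, mem_prod, mem_preimage]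
  tauto

variable [NormedSpace ℝ M] [NormedSpace ℝ N]

theorem smul_mem_negativeCone {q : M × N} (hq : q ∈ negativeCone M N) {c : ℝ} (hc : 0 < c) :
    c • q ∈ negativeCone M N := by
  simp only [negativeCone, mem_ofPred_eq, Prod.smul_fst, Prod.smul_snd, norm_smul,
    Real.norm_of_nonneg hc.le] at hq ⊢
  exact mul_lt_mul_of_pos_left hq hc

theorem ball_zero_inter_negativeCone (β : ℝ) :
    ball (0 : M × N) β ∩ negativeCone M N = (fun q : ℝ × M × N => q.1 • q.2) ''
      Ioo 0 β ×ˢ sphere (0 : M) 1 ×ˢ ball (0 : N) 1 := by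
  ext ⟨m, n⟩
  simp only [mem_inter_iff, mem_ball_zero_iff, Prod.norm_mk, negativeCone, mem_ofPred_eq,
    max_lt_iff, mem_image, mem_prod, mem_Ioo, mem_sphere_zero_iff_norm, Prod.exists,
    Prod.smul_mk, Prod.mk.injEq]
  constructor
  · rintro ⟨⟨hmβ, -⟩, hnm⟩
    have hm : 0 < ‖m‖ := (norm_nonneg n).trans_lt hnm
    refine ⟨‖m‖, ‖m‖⁻¹ • m, ‖m‖⁻¹ • n, ⟨⟨hm, hmβ⟩, ?_, ?_⟩, ?_, ?_⟩
    · rw [norm_smul, norm_inv, norm_norm, inv_mul_cancel₀ hm.ne']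
    · rwa [norm_smul, norm_inv, norm_norm, inv_mul_lt_iff₀ hm, mul_one]
    · rw [smul_smul, mul_inv_cancel₀ hm.ne', one_smul]
    · rw [smul_smul, mul_inv_cancel₀ hm.ne', one_smul]
  · rintro ⟨s, u, v, ⟨⟨hs, hsβ⟩, hu, hv⟩, rfl, rfl⟩
    simp only [norm_smul, Real.norm_of_nonneg hs.le, hu, mul_one]
    exact ⟨⟨hsβ, (mul_lt_of_lt_one_right hs hv).trans hsβ⟩, mul_lt_of_lt_one_right hs hv⟩

theorem isPreconnected_ball_zero_inter_negativeCone (hM : 1 < Module.rank ℝ M) (β : ℝ) :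
    IsPreconnected (ball (0 : M × N) β ∩ negativeCone M N) := by
  rw [ball_zero_inter_negativeCone]
  exact (isPreconnected_Ioo.prod ((isPreconnected_sphere hM 0 1).prod isPreconnected_ball)).image
    _ (continuous_fst.smul continuous_snd).continuousOn

theorem zero_mem_closure_ball_zero_inter_negativeCone [Nontrivial M] {β : ℝ} (hβ : 0 < β) :
    (0 : M × N) ∈ closure (ball (0 : M × N) β ∩ negativeCone M N) := by
  obtain ⟨e, he⟩ := exists_norm_eq M zero_le_one
  have hcont : Continuous fun s : ℝ => s • ((e, 0) : M × N) := continuous_id.smul continuous_const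
  have hmaps : MapsTo (fun s : ℝ => s • ((e, 0) : M × N)) (Ioo 0 β)
      (ball 0 β ∩ negativeCone M N) := by
    rw [ball_zero_inter_negativeCone]
    exact fun s hs => ⟨(s, e, 0), ⟨hs, by simpa using he, by simp⟩, rfl⟩
  have h0 : (0 : ℝ) ∈ closure (Ioo 0 β) := by
    rw [closure_Ioo hβ.ne]; exact left_mem_Icc.2 hβ.le
  simpa using closure_mono hmaps.image_subset (hcont.continuousWithinAt.mem_closure_image h0)

theorem mem_closure_ball_inter_preimage_snd_negativeCone [Nontrivial M] {c : T × M × N}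
    (hc : c.2 = 0) {β : ℝ} (hβ : 0 < β) :
    c ∈ closure (ball c β ∩ Prod.snd ⁻¹' negativeCone M N) := by
  rw [ball_inter_preimage_snd_negativeCone hc, closure_prod_eq, mem_prod, hc]
  exact ⟨subset_closure (mem_ball_self hβ), zero_mem_closure_ball_zero_inter_negativeCone hβ⟩

variable [NormedSpace ℝ T]

theorem isPreconnected_ball_inter_preimage_snd_negativeCone (hM : 1 < Module.rank ℝ M)
    {c : T × M × N} (hc : c.2 = 0) (β : ℝ) :
    IsPreconnected (ball c β ∩ Prod.snd ⁻¹' negativeCone M N) := by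
  rw [ball_inter_preimage_snd_negativeCone hc]
  exact isPreconnected_ball.prod (isPreconnected_ball_zero_inter_negativeCone hM β)

end NegativeCone

section Chart

variable {E T M N : Type*} [NormedAddCommGroup E] [NormedSpace ℝ E] [NormedAddCommGroup T]
  [NormedSpace ℝ T] [NormedAddCommGroup M] [NormedSpace ℝ M] [NormedAddCommGroup N]
  [NormedSpace ℝ N]

structure IsMorseBottChart (σ : ℝ) (f : E → ℝ) (Γ U : Set E) (φ : E → T × M × N)
    (ψ : T × M × N → E) : Prop where
  isOpen : IsOpen U
  isOpen_image : IsOpen (φ '' U)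
  contDiffOn : ContDiffOn ℝ 1 φ U
  contDiffOn_inv : ContDiffOn ℝ 1 ψ (φ '' U)
  left_inv : ∀ x ∈ U, ψ (φ x) = x
  snd_eq_zero : ∀ x ∈ Γ ∩ U, (φ x).2 = 0
  apply_eq : ∀ x ∈ U, f x = σ - ‖(φ x).2.1‖ ^ 2 + ‖(φ x).2.2‖ ^ 2

namespace IsMorseBottChart

variable {σ : ℝ} {f : E → ℝ} {Γ U : Set E} {φ : E → T × M × N} {ψ : T × M × N → E}

theorem apply_lt_iff (h : IsMorseBottChart σ f Γ U φ ψ) {x : E} (hx : x ∈ U) :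
    f x < σ ↔ (φ x).2 ∈ negativeCone M N := by
  rw [h.apply_eq x hx, negativeCone, mem_ofPred_eq, ← sq_lt_sq₀ (norm_nonneg _) (norm_nonneg _)]
  constructor <;> intro h <;> linarith

theorem apply_inv_lt (h : IsMorseBottChart σ f Γ U φ ψ) {w : T × M × N} (hw : w ∈ φ '' U)
    (hcone : w.2 ∈ negativeCone M N) : f (ψ w) < σ := by
  obtain ⟨x, hx, rfl⟩ := hw
  rwa [h.left_inv x hx, h.apply_lt_iff hx]

theorem continuousAt_inv (h : IsMorseBottChart σ f Γ U φ ψ) {w : T × M × N} (hw : w ∈ φ '' U) :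
    ContinuousAt ψ w :=
  h.contDiffOn_inv.continuousOn.continuousAt (h.isOpen_image.mem_nhds hw)

theorem exists_isPreconnected_nhds (h : IsMorseBottChart σ f Γ U φ ψ)
    (hM : 1 < Module.rank ℝ M) {y : E} (hy : y ∈ Γ ∩ U) {W : Set E} (hW : W ∈ 𝓝 y) :
    ∃ K ⊆ {x | f x < σ} ∩ W, IsPreconnected K ∧ y ∈ closure K ∧
      ∃ V ∈ 𝓝 y, {x | f x < σ} ∩ V ⊆ K := by
  have : Nontrivial M := (rank_pos_iff_nontrivial (R := ℝ)).1 (zero_lt_one.trans hM)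
  have hyφ : φ y ∈ φ '' U := mem_image_of_mem φ hy.2
  have hψy : ψ (φ y) = y := h.left_inv y hy.2
  obtain ⟨β, hβ, hβsub⟩ := Metric.mem_nhds_iff.1 <| inter_mem (h.isOpen_image.mem_nhds hyφ)
    (h.continuousAt_inv hyφ (hψy.symm ▸ hW))
  set Ω := ball (φ y) β ∩ Prod.snd ⁻¹' negativeCone M N
  have hΩ : Ω ⊆ φ '' U := fun w hw => (hβsub hw.1).1
  refine ⟨ψ '' Ω, ?_, ?_, ?_, U ∩ φ ⁻¹' ball (φ y) β, ?_, ?_⟩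
  · rintro _ ⟨w, hw, rfl⟩
    exact ⟨h.apply_inv_lt (hΩ hw) hw.2, (hβsub hw.1).2⟩
  · exact (isPreconnected_ball_inter_preimage_snd_negativeCone hM (h.snd_eq_zero y hy) β).image _
      (h.contDiffOn_inv.continuousOn.mono hΩ)
  · rw [← hψy]
    exact (h.continuousAt_inv hyφ).continuousWithinAt.mem_closure_image
      (mem_closure_ball_inter_preimage_snd_negativeCone (h.snd_eq_zero y hy) hβ)
  · exact inter_mem (h.isOpen.mem_nhds hy.2) <| (h.contDiffOn.continuousOn.continuousAt
      (h.isOpen.mem_nhds hy.2)).preimage_mem_nhds (ball_mem_nhds _ hβ)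
  · rintro x ⟨hx, hxU, hxβ⟩
    exact ⟨φ x, ⟨hxβ, (h.apply_lt_iff hxU).1 hx⟩, h.left_inv x hxU⟩

theorem exists_isPreconnected_of_approximatesLinearOn (h : IsMorseBottChart σ f Γ U φ ψ)
    {s : Set (T × M × N)} (hs : Convex ℝ s) (hsU : s ⊆ φ '' U) {A : (T × M × N) →L[ℝ] E}
    {ε : ℝ≥0} (hA : ApproximatesLinearOn ψ A s ε) {x y : E} (hx : x ∈ U) (hy : y ∈ Γ ∩ U)
    (hxs : φ x ∈ s) (hys : φ y ∈ s) (hfx : f x < σ) (hε : 2 * ε * ‖φ x - φ y‖ ≤ dist x y) :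
    ∃ C ⊆ {z | f z < σ} ∩ closedBall y (dist x y), IsPreconnected C ∧ x ∈ C ∧ y ∈ closure C := by
  let γ : ℝ → T × M × N := fun t => φ x + t • (φ y - φ x)
  have hγs : ∀ t ∈ Icc (0 : ℝ) 1, γ t ∈ s := fun t ht => hs.add_smul_sub_mem hxs hys ht
  have hcont : ContinuousOn (ψ ∘ γ) (Icc 0 1) :=
    h.contDiffOn_inv.continuousOn.comp (by fun_prop) fun t ht => hsU (hγs t ht)
  have hψx : ψ (φ x) = x := h.left_inv x hx
  have hψy : ψ (φ y) = y := h.left_inv y hy.2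
  refine ⟨ψ ∘ γ '' Ico 0 1, ?_, isPreconnected_Ico.image _ (hcont.mono Ico_subset_Icc_self),
    ⟨0, left_mem_Ico.2 zero_lt_one, by simp [γ, hψx]⟩, ?_⟩
  · rintro _ ⟨t, ht, rfl⟩
    have hγt : (γ t).2 = (1 - t) • (φ x).2 := by
      simp only [γ, Prod.snd_add, Prod.smul_snd, Prod.snd_sub, h.snd_eq_zero y hy]; module
    refine ⟨h.apply_inv_lt (hsU (hγs t (Ico_subset_Icc_self ht))) ?_, ?_⟩
    · rw [hγt]
      exact smul_mem_negativeCone ((h.apply_lt_iff hx).1 hfx) (sub_pos.2 ht.2)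
    · rw [mem_closedBall, Function.comp_apply, ← hψx, ← hψy]
      exact hA.dist_add_smul_sub_le hs hxs hys (by rwa [hψx, hψy]) (Ico_subset_Icc_self ht)
  · have h1 : (1 : ℝ) ∈ closure (Ico 0 1) := by
      rw [closure_Ico zero_ne_one]; exact right_mem_Icc.2 zero_le_one
    simpa [γ, hψy] using
      ((hcont 1 (right_mem_Icc.2 zero_le_one)).mono Ico_subset_Icc_self).mem_closure_image h1

theorem exists_pos_eventually_exists_isPreconnected (h : IsMorseBottChart σ f Γ U φ ψ) {a : E}
    (ha : a ∈ U) : ∃ ρ > 0, ∀ᶠ y in 𝓝 a, ∀ x ∈ ball y ρ, y ∈ Γ → f x < σ →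
      ∃ C ⊆ {z | f z < σ} ∩ closedBall y (dist x y), IsPreconnected C ∧ x ∈ C ∧ y ∈ closure C := by
  have haU : U ∈ 𝓝 a := h.isOpen.mem_nhds ha
  have haφ : φ a ∈ φ '' U := mem_image_of_mem φ ha
  obtain ⟨L, t, ht, hL⟩ := (h.contDiffOn.contDiffAt haU).exists_lipschitzOnWith
  set ε : ℝ≥0 := (2 * (L + 1))⁻¹
  have hεL : 2 * (ε : ℝ) * L ≤ 1 := by
    simp only [ε, NNReal.coe_inv, NNReal.coe_mul, NNReal.coe_add, NNReal.coe_one, NNReal.coe_ofNat]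
    rw [mul_inv, ← mul_assoc, mul_inv_cancel₀ two_ne_zero, one_mul, inv_mul_le_one₀ (by positivity)]
    linarith
  have hψ : HasStrictFDerivAt ψ (fderiv ℝ ψ (φ a)) (φ a) :=
    (h.contDiffOn_inv.contDiffAt (h.isOpen_image.mem_nhds haφ)).hasStrictFDerivAt one_ne_zero
  obtain ⟨t', ht', hA⟩ := hψ.approximates_deriv_on_nhds (c := ε) (Or.inr (by positivity))
  obtain ⟨δ, hδ, hδsub⟩ := Metric.mem_nhds_iff.1 (inter_mem ht' (h.isOpen_image.mem_nhds haφ))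
  obtain ⟨ρ, hρ, hρsub⟩ := Metric.mem_nhds_iff.1 <| inter_mem (inter_mem haU ht) <|
    (h.contDiffOn.continuousOn.continuousAt haU).preimage_mem_nhds (ball_mem_nhds _ hδ)
  refine ⟨ρ / 2, half_pos hρ, ?_⟩
  filter_upwards [ball_mem_nhds a (half_pos hρ)] with y hya x hxy hyΓ hfx
  obtain ⟨⟨hyU, hyt⟩, hyδ⟩ := hρsub (ball_subset_ball (half_le_self hρ.le) hya)
  obtain ⟨⟨hxU, hxt⟩, hxδ⟩ := hρsub <| mem_ball.2 <| calc
    dist x a ≤ dist x y + dist y a := dist_triangle x y a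
    _ < ρ / 2 + ρ / 2 := add_lt_add hxy hya
    _ = ρ := add_halves ρ
  refine h.exists_isPreconnected_of_approximatesLinearOn (convex_ball _ _)
    (fun w hw => (hδsub hw).2) (hA.mono_set fun w hw => (hδsub hw).1) hxU ⟨hyΓ, hyU⟩ hxδ hyδ hfx ?_
  calc 2 * ε * ‖φ x - φ y‖ ≤ 2 * ε * (L * dist x y) := by
        rw [← dist_eq_norm]; gcongr; exact hL.dist_le_mul x hxt y hyt
    _ = 2 * ε * L * dist x y := by ring
    _ ≤ dist x y := mul_le_of_le_one_left dist_nonneg hεL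

end IsMorseBottChart

end Chart

theorem IsMorseBottManifold.exists_isMorseBottChart {d dΓ j : ℕ}
    {f : EuclideanSpace ℝ (Fin d) → ℝ} {Γ : Set (EuclideanSpace ℝ (Fin d))} {σ : ℝ}
    (hMB : IsMorseBottManifold d dΓ j f Γ) (hσ : ∀ x ∈ Γ, f x = σ) {a : EuclideanSpace ℝ (Fin d)}
    (ha : a ∈ Γ) : ∃ U, ∃ φ : EuclideanSpace ℝ (Fin d) → EuclideanSpace ℝ (Fin dΓ) ×
      EuclideanSpace ℝ (Fin j) × EuclideanSpace ℝ (Fin (d - dΓ - j)), ∃ ψ,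
      a ∈ U ∧ IsMorseBottChart σ f Γ U φ ψ := by
  obtain ⟨U, φ, ψ, hU, haU, hφ, hφU, hψ, hψφ, -, hΓU, hf⟩ := hMB.2.2.2 a ha
  refine ⟨U, φ, ψ, haU, hU, hφU, hφ.of_le (by exact_mod_cast le_top),
    hψ.of_le (by exact_mod_cast le_top), hψφ, fun x hx => ?_, fun x hx => hσ a ha ▸ hf x hx⟩
  obtain ⟨-, h₁, h₂⟩ := hΓU ▸ hx
  exact Prod.ext h₁ h₂

theorem sublevel_connected_near_higher_index_manifold_general
    {d dΓ j : ℕ} (f : EuclideanSpace ℝ (Fin d) → ℝ)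
    (Γ : Set (EuclideanSpace ℝ (Fin d))) (σ : ℝ)
    (hMB : IsMorseBottManifold d dΓ j f Γ)
    (hj : 2 ≤ j)
    (hσ : ∀ x ∈ Γ, f x = σ) :
    ∃ r₀ > 0, ∀ r, 0 < r → r < r₀ → IsConnected (subLevel f σ ∩ tub Γ r) := by
  have hM : 1 < Module.rank ℝ (EuclideanSpace ℝ (Fin j)) := by
    rw [← Module.finrank_eq_rank, finrank_euclideanSpace_fin]; exact_mod_cast hj
  obtain ⟨r₀, hr₀, hpaths⟩ := hMB.1.exists_pos_forall_ball fun a ha => by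
    obtain ⟨U, φ, ψ, haU, hch⟩ := hMB.exists_isMorseBottChart hσ ha
    exact hch.exists_pos_eventually_exists_isPreconnected haU
  refine ⟨r₀, hr₀, fun r hr hrr₀ => isConnected_of_components_accumulate hMB.2.1 (fun y hy => ?_)
    fun x hx => ?_⟩
  · obtain ⟨U, φ, ψ, hyU, hch⟩ := hMB.exists_isMorseBottChart hσ hy
    obtain ⟨K, hKsub, hK, hyK, V, hV, hSV⟩ :=
      hch.exists_isPreconnected_nhds hM ⟨hy, hyU⟩ (ball_mem_nhds y hr)
    exact ⟨K, fun z hz => ⟨(hKsub hz).1, y, hy, (hKsub hz).2⟩, hK, hyK, V, hV,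
      fun z hz => hSV ⟨hz.1.1, hz.2⟩⟩
  · obtain ⟨y, hy, hxy⟩ := hx.2
    obtain ⟨C, hCsub, hC, hxC, hyC⟩ := hpaths y hy x (hxy.trans hrr₀) hy hx.1
    refine ⟨y, hy, closure_mono (hC.subset_connectedComponentIn hxC fun z hz => ?_) hyC⟩
    exact ⟨(hCsub hz).1, y, hy, (mem_closedBall.1 (hCsub hz).2).trans_lt hxy⟩

/-- **Connectedness of sublevel sets near critical manifolds of index ≥ 2**
(Proposition, part i). Let `f ∈ C^∞(ℝ^d; ℝ)` satisfy the Morse–Bott assumption, let `Γ`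
be a critical submanifold (of dimension `dΓ`) on which `Hess f` has `j ≥ 2` negative
eigenvalues, and set `σ = f(Γ)`. Then for all sufficiently small `r > 0` the set
`X_σ ∩ (Γ + B(0,r))` is connected. -/
theorem sublevel_connected_near_higher_index_manifold
    {d dΓ j : ℕ} (f : EuclideanSpace ℝ (Fin d) → ℝ)
    (Γ : Set (EuclideanSpace ℝ (Fin d))) (σ : ℝ)
    (hdim : dΓ + j ≤ d)
    (hf : ContDiff ℝ (⊤ : ℕ∞) f)
    (hMB : IsMorseBottManifold d dΓ j f Γ)
    (hj : 2 ≤ j)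
    (hσ : ∀ x ∈ Γ, f x = σ) :
    ∃ r₀ > 0, ∀ r, 0 < r → r < r₀ → IsConnected (subLevel f σ ∩ tub Γ r) :=
  sublevel_connected_near_higher_index_manifold_general f Γ σ hMB hj hσ

end
end

section
/- Let f ∈ C^∞(ℝ^d;ℝ) satisfy the Morse–Bott assumption and let Γ be a separating saddle manifold with σ = f(Γ). Then there exist exactly two connected components B_+ and B_− of X_σ = {f < σ} whose closures meet Γ, and moreover Γ ⊂ closure(B_+) ∩ closure(B_−). -/
open Metric Set

noncomputable section

/-- A saddle manifold `Γ` with `σ = f(Γ)` is **separating** when, for all small `r > 0`,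
`X_σ ∩ (Γ + B(0,r))` has exactly two connected components `A₊(r)` and `A₋(r)` which lie
in two disjoint connected components of `X_σ`. -/
def IsSeparating {d : ℕ} (f : EuclideanSpace ℝ (Fin d) → ℝ)
    (Γ : Set (EuclideanSpace ℝ (Fin d))) (σ : ℝ) : Prop :=
  ∃ r₀ > 0, ∀ r, 0 < r → r < r₀ →
    ∃ Aplus Aminus : Set (EuclideanSpace ℝ (Fin d)),
      HasExactlyTwoComponents (subLevel f σ ∩ tub Γ r) Aplus Aminus ∧
      ∀ x ∈ Aplus, ∀ y ∈ Aminus,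
        connectedComponentIn (subLevel f σ) x ≠ connectedComponentIn (subLevel f σ) y

/-! In Morse–Bott coordinates `(y_t, y₋, y₊)` around a point of `Γ` the sublevel set `{f < σ}` is
`{|y₊| < |y₋|}`, the union of the two convex halves `±y₋ > |y₊|`, and `Γ = {y₋ = y₊ = 0}` lies in
the closure of each half. Hence for a connected component `A` of `X_σ ∩ (Γ + B(0,r))` the closed
set `Γ ∩ closure A` is relatively open in `Γ`, so by connectedness it is empty or all of `Γ`.
Separation at every smaller radius `r'` forces both `A₊(r)` and `A₋(r)` to come within `r'` of `Γ`,
so by compactness their closures meet `Γ`, and therefore contain it. The components `B_±` of `X_σ`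
containing `A_±(r)` are the required ones: a component whose closure meets `Γ` has a point within
`r` of `Γ`, that is, a point of `A₊(r) ∪ A₋(r)`. -/

open Filter Topology

theorem IsPreconnected.subset_of_mem_nhdsWithin {α : Type*} [TopologicalSpace α] {K T : Set α}
    (hK : IsPreconnected K) (hT : IsClosed T) (hne : (K ∩ T).Nonempty)
    (h : ∀ a ∈ K ∩ T, T ∈ 𝓝[K] a) : K ⊆ T := by
  choose! V hVo haV hVT using fun a ha => mem_nhdsWithin.1 (h a ha)
  by_contra hKT
  obtain ⟨b, hbK, hbT⟩ := not_subset.1 hKT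
  have hcover : K ⊆ (⋃ a ∈ K ∩ T, V a) ∪ Tᶜ := fun x hx =>
    (em (x ∈ T)).elim (fun hxT => Or.inl (mem_biUnion ⟨hx, hxT⟩ (haV x ⟨hx, hxT⟩))) Or.inr
  obtain ⟨x, hxK, hxV, hxT⟩ := hK _ _ (isOpen_biUnion fun a ha => hVo a ha) hT.isOpen_compl
    hcover (hne.mono fun a ha => ⟨ha.1, mem_biUnion ha (haV a ha)⟩) ⟨b, hbK, hbT⟩
  obtain ⟨a, ha, hxa⟩ := mem_iUnion₂.1 hxV
  exact hxT (hVT a ha ⟨hxa, hxK⟩)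

theorem IsCompact.inter_closure_nonempty_of_forall_thickening {α : Type*} [PseudoEMetricSpace α]
    {K A : Set α} (hK : IsCompact K) (h : ∀ ε > 0, (A ∩ thickening ε K).Nonempty) :
    (K ∩ closure A).Nonempty := by
  by_contra hKA
  obtain ⟨δ, hδ, hdisj⟩ :=
    (disjoint_iff_inter_eq_empty.2 (not_nonempty_iff_eq_empty.1 hKA)).exists_thickenings hK
      isClosed_closure
  obtain ⟨x, hxA, hxK⟩ := h δ hδ
  exact hdisj.ne_of_mem hxK (self_subset_thickening hδ _ (subset_closure hxA)) rfl

theorem tub_eq_thickening {d : ℕ} (Γ : Set (EuclideanSpace ℝ (Fin d))) (r : ℝ) :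
    tub Γ r = thickening r Γ := by
  ext x
  exact mem_thickening_iff.symm

theorem tub_mono {d : ℕ} (Γ : Set (EuclideanSpace ℝ (Fin d))) {r r' : ℝ} (h : r ≤ r') :
    tub Γ r ⊆ tub Γ r' := by
  simpa only [tub_eq_thickening] using thickening_mono h Γ

/-- For `s = ±1`, one of the two halves of the model sublevel set `{|y₊| < |y₋|}` in coordinates
`(y_t, y₋, y₊)`. -/
def modelSide {E F : Type*} [NormedAddCommGroup F] (s : ℝ) :
    Set (E × EuclideanSpace ℝ (Fin 1) × F) :=
  {y | ‖y.2.2‖ < s * y.2.1 0}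

theorem norm_lt_norm_iff_exists_mem_modelSide {E F : Type*} [NormedAddCommGroup F]
    (y : E × EuclideanSpace ℝ (Fin 1) × F) :
    ‖y.2.2‖ < ‖y.2.1‖ ↔ ∃ s : ℝ, (s = 1 ∨ s = -1) ∧ y ∈ modelSide s := by
  simp [modelSide, EuclideanSpace.norm_eq, Real.sqrt_sq_eq_abs, lt_abs]

section ModelSides

variable {E F : Type*} [NormedAddCommGroup E] [NormedSpace ℝ E]
  [NormedAddCommGroup F] [NormedSpace ℝ F]

theorem convex_modelSide (s : ℝ) :
    Convex ℝ (modelSide s : Set (E × EuclideanSpace ℝ (Fin 1) × F)) := by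
  let ℓ : (E × EuclideanSpace ℝ (Fin 1) × F) →ₗ[ℝ] ℝ :=
    s • ((EuclideanSpace.proj (0 : Fin 1)).toLinearMap ∘ₗ LinearMap.fst ℝ _ _ ∘ₗ
      LinearMap.snd ℝ _ _)
  have hconv : ConvexOn ℝ univ (fun y : E × EuclideanSpace ℝ (Fin 1) × F => ‖y.2.2‖ - ℓ y) :=
    ((convexOn_norm convex_univ).comp_linearMap (LinearMap.snd ℝ _ _ ∘ₗ LinearMap.snd ℝ _ _)).sub
      (ℓ.concaveOn convex_univ)
  simpa [modelSide, ℓ, sub_neg] using hconv.convex_lt 0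

theorem mem_closure_modelSide {s : ℝ} (hs : s ≠ 0) {y : E × EuclideanSpace ℝ (Fin 1) × F}
    (hy : y.2 = 0) : y ∈ closure (modelSide s) := by
  let v : E × EuclideanSpace ℝ (Fin 1) × F := (0, EuclideanSpace.single 0 s, 0)
  have hlim : Tendsto (fun t : ℝ => y + t • v) (𝓝[>] 0) (𝓝 y) := by
    have h := ((by fun_prop : Continuous fun t : ℝ => y + t • v).tendsto 0).mono_left
      (nhdsWithin_le_nhds (s := Ioi 0))
    rwa [zero_smul, add_zero] at h
  refine mem_closure_of_tendsto hlim (eventually_nhdsWithin_of_forall fun t (ht : 0 < t) => ?_)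
  simp only [modelSide, Prod.smul_mk, smul_zero, mem_ofPred_eq, Prod.snd_add, hy, zero_add,
    norm_zero, PiLp.smul_apply, PiLp.single_eq_same, smul_eq_mul, v]
  rw [mul_left_comm]
  exact mul_pos ht (mul_self_pos.2 hs)

end ModelSides

theorem IsMorseBottManifold.exists_sublevel_sides {d dΓ : ℕ} {f : EuclideanSpace ℝ (Fin d) → ℝ}
    {Γ : Set (EuclideanSpace ℝ (Fin d))} (hMB : IsMorseBottManifold d dΓ 1 f Γ)
    {a : EuclideanSpace ℝ (Fin d)} (ha : a ∈ Γ) {ρ : ℝ} (hρ : 0 < ρ) :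
    ∃ V, IsOpen V ∧ a ∈ V ∧ V ⊆ ball a ρ ∧
      ∀ x ∈ V ∩ subLevel f (f a), ∃ t ⊆ V ∩ subLevel f (f a),
        IsPreconnected t ∧ x ∈ t ∧ Γ ∩ V ⊆ closure t := by
  obtain ⟨U, φ, ψ, hU, haU, hφ, hφU, hψ, hψφ, -, hΓU, hf⟩ := hMB.2.2.2 a ha
  have hψcont : ∀ y ∈ φ '' U, ContinuousAt ψ y := fun y hy =>
    hψ.continuousOn.continuousAt (hφU.mem_nhds hy)
  obtain ⟨δ, hδ, hball⟩ := Metric.mem_nhds_iff.1 <| inter_mem (hφU.mem_nhds (mem_image_of_mem φ haU))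
    ((hψcont _ (mem_image_of_mem φ haU)).preimage_mem_nhds
      (by rw [hψφ a haU]; exact ball_mem_nhds a hρ))
  set V := U ∩ φ ⁻¹' ball (φ a) δ
  have hψV : ∀ y ∈ ball (φ a) δ, ψ y ∈ V ∧ φ (ψ y) = y := by
    intro y hy
    obtain ⟨u, hu, rfl⟩ := (hball hy).1
    rw [hψφ u hu]
    exact ⟨⟨hu, hy⟩, rfl⟩
  have hsub : ∀ x ∈ U, x ∈ subLevel f (f a) ↔ ‖(φ x).2.2‖ < ‖(φ x).2.1‖ := fun x hx => by
    change f x < f a ↔ _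
    rw [hf x hx, ← pow_lt_pow_iff_left₀ (norm_nonneg _) (norm_nonneg _) two_ne_zero]
    constructor <;> intro <;> linarith
  refine ⟨V, hφ.continuousOn.isOpen_inter_preimage hU isOpen_ball, ⟨haU, mem_ball_self hδ⟩,
    fun x hx => by simpa [hψφ x hx.1] using (hball hx.2).2, ?_⟩
  rintro x ⟨hxV, hxσ⟩
  obtain ⟨s, hs, hxs⟩ := (norm_lt_norm_iff_exists_mem_modelSide _).1 ((hsub x hxV.1).1 hxσ)
  set T := ball (φ a) δ ∩ modelSide s
  refine ⟨ψ '' T, ?_, ((convex_ball _ _).inter (convex_modelSide s)).isPreconnected.image ψ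
    (hψ.continuousOn.mono fun y hy => (hball hy.1).1), ⟨φ x, ⟨hxV.2, hxs⟩, hψφ x hxV.1⟩, ?_⟩
  · rintro _ ⟨y, ⟨hy, hys⟩, rfl⟩
    obtain ⟨hyV, hφy⟩ := hψV y hy
    refine ⟨hyV, (hsub _ hyV.1).2 ?_⟩
    rw [hφy]
    exact (norm_lt_norm_iff_exists_mem_modelSide y).2 ⟨s, hs, hys⟩
  · rintro a' ⟨ha'Γ, ha'V⟩
    obtain ⟨-, h₁, h₂⟩ : a' ∈ {x ∈ U | (φ x).2.1 = 0 ∧ (φ x).2.2 = 0} := hΓU ▸ ⟨ha'Γ, ha'V.1⟩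
    have hs0 : s ≠ 0 := by rcases hs with rfl | rfl <;> norm_num
    have hcl : φ a' ∈ closure T :=
      isOpen_ball.inter_closure ⟨ha'V.2, mem_closure_modelSide hs0 (Prod.ext h₁ h₂)⟩
    rw [← hψφ a' ha'V.1]
    exact (hψcont _ (hball ha'V.2).1).continuousWithinAt.mem_closure_image hcl

namespace HasExactlyTwoComponents

variable {d : ℕ} {S Aplus Aminus X t : Set (EuclideanSpace ℝ (Fin d))}
  {x y : EuclideanSpace ℝ (Fin d)}

theorem symm (h : HasExactlyTwoComponents S Aplus Aminus) :
    HasExactlyTwoComponents S Aminus Aplus :=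
  ⟨h.2.1, h.1, union_comm Aplus Aminus ▸ h.2.2.1, h.2.2.2.1.symm, h.2.2.2.2.2, h.2.2.2.2.1⟩

theorem left_subset (h : HasExactlyTwoComponents S Aplus Aminus) : Aplus ⊆ S :=
  h.2.2.1 ▸ subset_union_left

theorem isPreconnected_left (h : HasExactlyTwoComponents S Aplus Aminus) :
    IsPreconnected Aplus := by
  obtain ⟨x, hx⟩ := h.1
  exact h.2.2.2.2.1 x hx ▸ isPreconnected_connectedComponentIn

theorem subset_left_of_mem (h : HasExactlyTwoComponents S Aplus Aminus) (hx : x ∈ Aplus)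
    (ht : IsPreconnected t) (htS : t ⊆ S) (hxt : x ∈ t) : t ⊆ Aplus :=
  h.2.2.2.2.1 x hx ▸ ht.subset_connectedComponentIn hxt htS

theorem subset_or_subset (h : HasExactlyTwoComponents S Aplus Aminus) (ht : IsPreconnected t)
    (htS : t ⊆ S) : t ⊆ Aplus ∨ t ⊆ Aminus := by
  rcases t.eq_empty_or_nonempty with rfl | ⟨x, hx⟩
  · exact Or.inl (empty_subset _)
  rcases h.2.2.1 ▸ htS hx with hx' | hx'
  exacts [Or.inl (h.subset_left_of_mem hx' ht htS hx),
    Or.inr (h.symm.subset_left_of_mem hx' ht htS hx)]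

theorem subset_connectedComponentIn_left (h : HasExactlyTwoComponents S Aplus Aminus)
    (hSX : S ⊆ X) (hx : x ∈ Aplus) : Aplus ⊆ connectedComponentIn X x :=
  h.2.2.2.2.1 x hx ▸ connectedComponentIn_mono x hSX

theorem connectedComponentIn_eq_left (h : HasExactlyTwoComponents S Aplus Aminus)
    (hSX : S ⊆ X) (hx : x ∈ Aplus) (hy : y ∈ Aplus) :
    connectedComponentIn X x = connectedComponentIn X y :=
  connectedComponentIn_eq (h.subset_connectedComponentIn_left hSX hx hy)

end HasExactlyTwoComponents

theorem IsSeparating.exists_components_approaching {d : ℕ} {f : EuclideanSpace ℝ (Fin d) → ℝ}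
    {Γ : Set (EuclideanSpace ℝ (Fin d))} {σ : ℝ} (hsep : IsSeparating f Γ σ) :
    ∃ r > 0, ∃ Aplus Aminus : Set (EuclideanSpace ℝ (Fin d)),
      HasExactlyTwoComponents (subLevel f σ ∩ tub Γ r) Aplus Aminus ∧
      (∀ x ∈ Aplus, ∀ y ∈ Aminus,
        connectedComponentIn (subLevel f σ) x ≠ connectedComponentIn (subLevel f σ) y) ∧
      ∀ ε > 0, (Aplus ∩ tub Γ ε).Nonempty ∧ (Aminus ∩ tub Γ ε).Nonempty := by
  obtain ⟨r₀, hr₀, hsep⟩ := hsep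
  obtain ⟨Ap, Am, hS, hApAm⟩ := hsep (r₀ / 2) (by positivity) (by linarith)
  refine ⟨r₀ / 2, by positivity, Ap, Am, hS, hApAm, fun ε hε => ?_⟩
  obtain ⟨Ap', Am', hS', hApAm'⟩ := hsep (min ε (r₀ / 2)) (lt_min hε (by positivity))
    ((min_le_right _ _).trans_lt (by linarith))
  have hS'S : subLevel f σ ∩ tub Γ (min ε (r₀ / 2)) ⊆ subLevel f σ ∩ tub Γ (r₀ / 2) :=
    inter_subset_inter_right _ (tub_mono Γ (min_le_right _ _))
  have hnear : ∀ x ∈ subLevel f σ ∩ tub Γ (min ε (r₀ / 2)), x ∈ tub Γ ε := fun x hx =>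
    tub_mono Γ (min_le_left _ _) hx.2
  obtain ⟨xp, hxp⟩ := hS'.1
  obtain ⟨xm, hxm⟩ := hS'.2.1
  have hxpS := hS'.left_subset hxp
  have hxmS := hS'.symm.left_subset hxm
  rcases hS.subset_or_subset hS'.isPreconnected_left (hS'.left_subset.trans hS'S) with hp | hp <;>
  rcases hS.subset_or_subset hS'.symm.isPreconnected_left (hS'.symm.left_subset.trans hS'S)
    with hm | hm
  · exact absurd (hS.connectedComponentIn_eq_left inter_subset_left (hp hxp) (hm hxm))
      (hApAm' xp hxp xm hxm)
  · exact ⟨⟨xp, hp hxp, hnear xp hxpS⟩, ⟨xm, hm hxm, hnear xm hxmS⟩⟩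
  · exact ⟨⟨xm, hm hxm, hnear xm hxmS⟩, ⟨xp, hp hxp, hnear xp hxpS⟩⟩
  · exact absurd (hS.symm.connectedComponentIn_eq_left inter_subset_left (hp hxp) (hm hxm))
      (hApAm' xp hxp xm hxm)

section Adjacency

variable {d dΓ : ℕ} {f : EuclideanSpace ℝ (Fin d) → ℝ} {Γ A : Set (EuclideanSpace ℝ (Fin d))}
  {σ r : ℝ}

theorem IsMorseBottManifold.closure_mem_nhdsWithin (hMB : IsMorseBottManifold d dΓ 1 f Γ)
    (hσ : ∀ x ∈ Γ, f x = σ) (hr : 0 < r)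
    (hA : ∀ x ∈ A, connectedComponentIn (subLevel f σ ∩ tub Γ r) x = A)
    {a : EuclideanSpace ℝ (Fin d)} (ha : a ∈ Γ) (haA : a ∈ closure A) : closure A ∈ 𝓝[Γ] a := by
  obtain ⟨V, hV, haV, hVa, hsides⟩ := hMB.exists_sublevel_sides ha hr
  rw [hσ a ha] at hsides
  obtain ⟨x, hxV, hxA⟩ := _root_.mem_closure_iff.1 haA V hV haV
  have hxX : x ∈ subLevel f σ := (connectedComponentIn_subset _ x ((hA x hxA).symm ▸ hxA)).1
  obtain ⟨t, htV, ht, hxt, hΓt⟩ := hsides x ⟨hxV, hxX⟩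
  have htA : t ⊆ A := hA x hxA ▸ ht.subset_connectedComponentIn hxt
    fun y hy => ⟨(htV hy).2, a, ha, hVa (htV hy).1⟩
  exact mem_nhdsWithin.2 ⟨V, hV, haV, fun y hy => closure_mono htA (hΓt ⟨hy.2, hy.1⟩)⟩

theorem IsMorseBottManifold.subset_closure (hMB : IsMorseBottManifold d dΓ 1 f Γ)
    (hσ : ∀ x ∈ Γ, f x = σ) (hr : 0 < r)
    (hA : ∀ x ∈ A, connectedComponentIn (subLevel f σ ∩ tub Γ r) x = A)
    (hnear : ∀ ε > 0, (A ∩ tub Γ ε).Nonempty) : Γ ⊆ closure A :=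
  hMB.2.1.isPreconnected.subset_of_mem_nhdsWithin isClosed_closure
    (hMB.1.inter_closure_nonempty_of_forall_thickening fun ε hε => by
      simpa only [tub_eq_thickening] using hnear ε hε)
    fun _ ha => hMB.closure_mem_nhdsWithin hσ hr hA ha.1 ha.2

end Adjacency

theorem two_components_adjacent_to_separating_saddle_general
    {d dΓ : ℕ} (f : EuclideanSpace ℝ (Fin d) → ℝ)
    (Γ : Set (EuclideanSpace ℝ (Fin d))) (σ : ℝ)
    (hMB : IsMorseBottManifold d dΓ 1 f Γ)
    (hσ : ∀ x ∈ Γ, f x = σ)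
    (hsep : IsSeparating f Γ σ) :
    ∃ Bplus Bminus : Set (EuclideanSpace ℝ (Fin d)),
      Bplus ≠ Bminus ∧
      (∃ x ∈ Bplus, Bplus = connectedComponentIn (subLevel f σ) x) ∧
      (∃ x ∈ Bminus, Bminus = connectedComponentIn (subLevel f σ) x) ∧
      Γ ⊆ closure Bplus ∩ closure Bminus ∧
      ∀ B : Set (EuclideanSpace ℝ (Fin d)),
        (∃ x ∈ B, B = connectedComponentIn (subLevel f σ) x) →
        (closure B ∩ Γ).Nonempty → B = Bplus ∨ B = Bminus := by
  obtain ⟨r, hr, Ap, Am, hS, hApAm, hnear⟩ := hsep.exists_components_approaching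
  have hSX : subLevel f σ ∩ tub Γ r ⊆ subLevel f σ := inter_subset_left
  have ⟨⟨xp, hxp⟩, ⟨xm, hxm⟩, hunion, _, hcompP, hcompM⟩ := hS
  have hΓp := hMB.subset_closure hσ hr hcompP fun ε hε => (hnear ε hε).1
  have hΓm := hMB.subset_closure hσ hr hcompM fun ε hε => (hnear ε hε).2
  refine ⟨_, _, hApAm xp hxp xm hxm,
    ⟨xp, mem_connectedComponentIn (hSX (hS.left_subset hxp)), rfl⟩,
    ⟨xm, mem_connectedComponentIn (hSX (hS.symm.left_subset hxm)), rfl⟩,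
    fun a ha => ⟨closure_mono (hS.subset_connectedComponentIn_left hSX hxp) (hΓp ha),
      closure_mono (hS.symm.subset_connectedComponentIn_left hSX hxm) (hΓm ha)⟩, ?_⟩
  rintro B ⟨b, -, rfl⟩ ⟨a, haB, haΓ⟩
  obtain ⟨x, hxa, hxB⟩ := _root_.mem_closure_iff.1 haB (ball a r) isOpen_ball (mem_ball_self hr)
  rw [connectedComponentIn_eq hxB]
  have hxS : x ∈ Ap ∪ Am := hunion ▸ ⟨connectedComponentIn_subset _ _ hxB, a, haΓ, hxa⟩
  rcases hxS with h | h
  exacts [Or.inl (hS.connectedComponentIn_eq_left hSX h hxp),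
    Or.inr (hS.symm.connectedComponentIn_eq_left hSX h hxm)]

/-- **The two components adjacent to a separating saddle manifold** (Lemma).
Let `f ∈ C^∞(ℝ^d; ℝ)` satisfy the Morse–Bott assumption and let `Γ` be a separating
saddle manifold with `σ = f(Γ)`. Then there exist exactly two connected components `B₊`
and `B₋` of `X_σ = {f < σ}` whose closures meet `Γ`, and moreover
`Γ ⊆ closure B₊ ∩ closure B₋`. -/
theorem two_components_adjacent_to_separating_saddle
    {d dΓ : ℕ} (f : EuclideanSpace ℝ (Fin d) → ℝ)
    (Γ : Set (EuclideanSpace ℝ (Fin d))) (σ : ℝ)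
    (hdim : dΓ + 1 ≤ d)
    (hf : ContDiff ℝ (⊤ : ℕ∞) f)
    (hMB : IsMorseBottManifold d dΓ 1 f Γ)
    (hσ : ∀ x ∈ Γ, f x = σ)
    (hsep : IsSeparating f Γ σ) :
    ∃ Bplus Bminus : Set (EuclideanSpace ℝ (Fin d)),
      Bplus ≠ Bminus ∧
      (∃ x ∈ Bplus, Bplus = connectedComponentIn (subLevel f σ) x) ∧
      (∃ x ∈ Bminus, Bminus = connectedComponentIn (subLevel f σ) x) ∧
      Γ ⊆ closure Bplus ∩ closure Bminus ∧
      ∀ B : Set (EuclideanSpace ℝ (Fin d)),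
        (∃ x ∈ B, B = connectedComponentIn (subLevel f σ) x) →
        (closure B ∩ Γ).Nonempty → B = Bplus ∨ B = Bminus :=
  two_components_adjacent_to_separating_saddle_general f Γ σ hMB hσ hsep

end
end

section
/- Let φ be a local diffeomorphism of ℝ^d defined in a neighborhood of a point a ∈ ℝ^d. Then there exists r_a > 0 such that for all b ∈ B(a, r_a) and all 0 < r < r_a, the set φ(B(b, r)) is star-shaped with respect to the point φ(b), i.e. for every x ∈ B(b,r) and t ∈ [0,1], the point (1−t)φ(b) + tφ(x) belongs to φ(B(b,r)). -/
open Metric Set Filter Topology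
open scoped NNReal

/-!
Near `a` the map `φ` is `ε`-close to its differential `A` and near `φ a` the inverse `ψ` is
`ε`-close to `B = A⁻¹`, in the sense of `ApproximatesLinearOn`. Pulling the point
`y = (1 - t) φ b + t φ x` back by `ψ` gives `ψ y - b = t (x - b) + O(ε (1 - t) ‖x - b‖)`, so for
`ε` small compared with `‖A‖` and `‖B‖` we get `‖ψ y - b‖ ≤ ‖x - b‖ < r`, i.e. `y = φ (ψ y)` lies
in `φ (B(b, r))`.
-/

section

variable {𝕜 E F : Type*} [NontriviallyNormedField 𝕜] [NormedAddCommGroup E] [NormedSpace 𝕜 E]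
  [NormedAddCommGroup F] [NormedSpace 𝕜 F]

theorem HasFDerivAt.comp_eq_id_of_eventually_leftInverse {f : E → F} {g : F → E}
    {f' : E →L[𝕜] F} {g' : F →L[𝕜] E} {a : E} (hf : HasFDerivAt f f' a)
    (hg : HasFDerivAt g g' (f a)) (hgf : g ∘ f =ᶠ[𝓝 a] id) :
    g'.comp f' = ContinuousLinearMap.id 𝕜 E :=
  ((hg.comp a hf).congr_of_eventuallyEq hgf.symm).unique (hasFDerivAt_id a)

theorem ApproximatesLinearOn.norm_sub_le {f : E → F} {f' : E →L[𝕜] F} {s : Set E} {c : ℝ≥0}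
    (hf : ApproximatesLinearOn f f' s c) {x y : E} (hx : x ∈ s) (hy : y ∈ s) :
    ‖f x - f y‖ ≤ (‖f'‖ + c) * ‖x - y‖ :=
  calc ‖f x - f y‖ = ‖f' (x - y) + (f x - f y - f' (x - y))‖ := by rw [add_sub_cancel]
    _ ≤ ‖f'‖ * ‖x - y‖ + c * ‖x - y‖ := norm_add_le_of_le (f'.le_opNorm _) (hf x hx y hy)
    _ = (‖f'‖ + c) * ‖x - y‖ := by ring

end

section

variable {E F : Type*} [NormedAddCommGroup E] [NormedSpace ℝ E]
  [NormedAddCommGroup F] [NormedSpace ℝ F]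
  {φ : E → F} {ψ : F → E} {A : E →L[ℝ] F} {B : F →L[ℝ] E} {S : Set E} {T : Set F}
  {cφ cψ : ℝ≥0}

theorem norm_leftInverse_segment_sub_le (hφ : ApproximatesLinearOn φ A S cφ)
    (hψ : ApproximatesLinearOn ψ B T cψ) (hBA : ∀ v, B (A v) = v)
    (hc : ‖B‖ * cφ + cψ * (‖A‖ + cφ) ≤ 1) {b x : E} (hb : b ∈ S) (hx : x ∈ S)
    (hψx : ψ (φ x) = x) (hφx : φ x ∈ T) {t : ℝ} (ht : t ∈ Icc (0 : ℝ) 1)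
    (hy : (1 - t) • φ b + t • φ x ∈ T) :
    ‖ψ ((1 - t) • φ b + t • φ x) - b‖ ≤ ‖x - b‖ := by
  set y := (1 - t) • φ b + t • φ x
  obtain ⟨ht₀, ht₁⟩ := ht
  have hyx : y - φ x = (1 - t) • (φ b - φ x) := by module
  have hBy : B (y - φ x) = (1 - t) • (B (φ b) - B (φ x)) := by simp only [hyx, map_smul, map_sub]
  have hdecomp : ψ y - b = t • (x - b) - (1 - t) • B (φ x - φ b - A (x - b))
      + (ψ y - ψ (φ x) - B (y - φ x)) := by
    rw [hψx, hBy, map_sub, map_sub, hBA]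
    module
  have hφerr : ‖B (φ x - φ b - A (x - b))‖ ≤ ‖B‖ * cφ * ‖x - b‖ := by
    rw [mul_assoc]
    exact B.le_opNorm_of_le (hφ x hx b hb)
  have hψerr : ‖ψ y - ψ (φ x) - B (y - φ x)‖ ≤ cψ * ((1 - t) * ((‖A‖ + cφ) * ‖x - b‖)) := by
    refine (hψ y hy (φ x) hφx).trans (mul_le_mul_of_nonneg_left ?_ cψ.2)
    rw [hyx, norm_smul, Real.norm_of_nonneg (by linarith), norm_sub_rev]
    exact mul_le_mul_of_nonneg_left (hφ.norm_sub_le hx hb) (by linarith)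
  calc ‖ψ y - b‖
      ≤ t * ‖x - b‖ + (1 - t) * (‖B‖ * cφ * ‖x - b‖)
        + cψ * ((1 - t) * ((‖A‖ + cφ) * ‖x - b‖)) := by
        rw [hdecomp]
        refine norm_add_le_of_le (norm_sub_le_of_le ?_ ?_) hψerr
        · rw [norm_smul, Real.norm_of_nonneg ht₀]
        · rw [norm_smul, Real.norm_of_nonneg (by linarith)]
          exact mul_le_mul_of_nonneg_left hφerr (by linarith)
    _ = (t + (1 - t) * (‖B‖ * cφ + cψ * (‖A‖ + cφ))) * ‖x - b‖ := by ring
    _ ≤ ‖x - b‖ := by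
        refine mul_le_of_le_one_left (norm_nonneg _) ?_
        nlinarith

theorem starConvex_image_ball_of_approximatesLinearOn (hφ : ApproximatesLinearOn φ A S cφ)
    (hψ : ApproximatesLinearOn ψ B T cψ) (hBA : ∀ v, B (A v) = v)
    (hc : ‖B‖ * cφ + cψ * (‖A‖ + cφ) ≤ 1) (hST : MapsTo φ S T) (hT : Convex ℝ T)
    (hψφ : ∀ x ∈ S, ψ (φ x) = x) (hφψ : ∀ y ∈ T, φ (ψ y) = y) {b : E} {r : ℝ}
    (hbr : ball b r ⊆ S) (hr : 0 < r) :
    StarConvex ℝ (φ b) (φ '' ball b r) := by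
  rintro _ ⟨x, hx, rfl⟩ s t hs ht hst
  obtain rfl : s = 1 - t := by linarith
  have hb : b ∈ S := hbr (mem_ball_self hr)
  have hy : (1 - t) • φ b + t • φ x ∈ T := hT (hST hb) (hST (hbr hx)) hs ht hst
  refine ⟨ψ ((1 - t) • φ b + t • φ x), ?_, hφψ _ hy⟩
  rw [mem_ball, dist_eq_norm]
  exact (norm_leftInverse_segment_sub_le hφ hψ hBA hc hb (hbr hx) (hψφ x (hbr hx))
    (hST (hbr hx)) ⟨ht, by linarith⟩ hy).trans_lt (mem_ball_iff_norm.1 hx)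

theorem exists_pos_mul_add_le_one (α β : ℝ) : ∃ ε : ℝ≥0, 0 < ε ∧ α * ε + ε * (β + ε) ≤ 1 := by
  have hlim : Tendsto (fun ε : ℝ≥0 => α * ε + ε * (β + ε)) (𝓝[>] 0) (𝓝 0) := by
    refine tendsto_nhdsWithin_of_tendsto_nhds ?_
    simpa using ((by fun_prop : Continuous (fun ε : ℝ≥0 => α * ε + ε * (β + ε))).tendsto 0)
  exact ((hlim.eventually (ge_mem_nhds zero_lt_one)).and self_mem_nhdsWithin).exists.imp
    fun ε h => ⟨h.2, h.1⟩

end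

/-- **Star-shapedness of diffeomorphic images of small balls.**
Let `φ` be a local diffeomorphism of `ℝ^d` defined in a neighborhood of a point `a`
(i.e. there is an open neighborhood `U` of `a` on which `φ` is smooth, with open image,
admitting a smooth inverse `ψ`). Then there exists `r_a > 0` such that for all
`b ∈ B(a, r_a)` and all `0 < r < r_a`, the set `φ(B(b, r))` is star-shaped with respect
to `φ(b)`: for every `x ∈ B(b, r)` and `t ∈ [0, 1]`, the point `(1 - t) φ(b) + t φ(x)`
belongs to `φ(B(b, r))`. -/
theorem starshaped_image_of_small_balls
    {d : ℕ} (φ ψ : EuclideanSpace ℝ (Fin d) → EuclideanSpace ℝ (Fin d))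
    (a : EuclideanSpace ℝ (Fin d)) (U : Set (EuclideanSpace ℝ (Fin d)))
    (hU : IsOpen U) (haU : a ∈ U)
    (hφ : ContDiffOn ℝ (⊤ : ℕ∞) φ U)
    (hopen : IsOpen (φ '' U))
    (hψ : ContDiffOn ℝ (⊤ : ℕ∞) ψ (φ '' U))
    (hinv₁ : ∀ x ∈ U, ψ (φ x) = x)
    (hinv₂ : ∀ y ∈ φ '' U, φ (ψ y) = y) :
    ∃ ra > 0, ∀ b ∈ ball a ra, ∀ r, 0 < r → r < ra →
      ball b r ⊆ U ∧
      ∀ x ∈ ball b r, ∀ t ∈ Icc (0 : ℝ) 1,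
        (1 - t) • φ b + t • φ x ∈ φ '' ball b r := by
  have hUa : U ∈ 𝓝 a := hU.mem_nhds haU
  have hUφa : φ '' U ∈ 𝓝 (φ a) := hopen.mem_nhds (mem_image_of_mem φ haU)
  have hφ' := (hφ.contDiffAt hUa).hasStrictFDerivAt (by simp)
  have hψ' := (hψ.contDiffAt hUφa).hasStrictFDerivAt (by simp)
  have hBA := hφ'.hasFDerivAt.comp_eq_id_of_eventually_leftInverse hψ'.hasFDerivAt
    (eventually_of_mem hUa hinv₁)
  obtain ⟨ε, hε, hc⟩ := exists_pos_mul_add_le_one ‖fderiv ℝ ψ (φ a)‖ ‖fderiv ℝ φ a‖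
  obtain ⟨T, hT, hψT⟩ := hψ'.approximates_deriv_on_nhds (Or.inr hε)
  obtain ⟨δ, hδ, hδT⟩ := Metric.mem_nhds_iff.1 (inter_mem hT hUφa)
  obtain ⟨S, hS, hφS⟩ := hφ'.approximates_deriv_on_nhds (Or.inr hε)
  obtain ⟨ρ, hρ, hρS⟩ := Metric.mem_nhds_iff.1 <| inter_mem (inter_mem hS hUa)
    (hφ'.continuousAt.preimage_mem_nhds (ball_mem_nhds (φ a) hδ))
  refine ⟨ρ / 2, by positivity, fun b hb r hr hrρ => ?_⟩
  have hbr : ball b r ⊆ ball a ρ := ball_subset_ball' (by linarith [mem_ball.1 hb])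
  refine ⟨fun x hx => (hρS (hbr hx)).1.2, fun x hx t ht => ?_⟩
  have hstar := starConvex_image_ball_of_approximatesLinearOn
    (hφS.mono_set fun z hz => (hρS hz).1.1) (hψT.mono_set fun y hy => (hδT hy).1)
    (DFunLike.congr_fun hBA) hc (fun z hz => (hρS hz).2) (convex_ball (φ a) δ)
    (fun z hz => hinv₁ z (hρS hz).1.2) (fun y hy => hinv₂ y (hδT hy).2) hbr hr
  exact hstar (mem_image_of_mem φ hx) (by linarith [ht.2]) ht.1 (by ring)
end
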